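/- Let {ε_t} be a stationary L₄-decomposable Bernoulli shift with E ε_t = 0 and rate a > 2, and let γ_j = E(ε₀ ε_j) denote its autocovariances. Then Σ_{j=1}^∞ j |γ_j| < ∞. -/

import Mathlib

open MeasureTheory ProbabilityTheory Filter Matrix Topology Asymptotics
open scoped ProbabilityTheory

noncomputable section

namespace OnlineCPD

/-- Euclidean norm on `Fin d → ℝ`. -/
def euclNorm {d : ℕ} (v : Fin d → ℝ) : ℝ := Real.sqrt (∑ j, v j ^ 2)

/-- Frobenius norm of a real matrix. -/
def frobNorm {d : ℕ} (A : Matrix (Fin d) (Fin d) ℝ) : ℝ := Real.sqrt (∑ i, ∑ j, A i j ^ 2)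

variable {Ω : Type*} [MeasureSpace Ω]

/-- The `L_ν` norm `(E |X|^ν)^{1/ν}` of a real random variable. -/
def lnorm (X : Ω → ℝ) (ν : ℝ) : ℝ := (∫ ω, |X ω| ^ ν) ^ (1 / ν)

/-- Innovation data for a decomposable Bernoulli shift: an i.i.d. sequence `η` indexed by `ℤ`
together with i.i.d. copies `ηc s t ℓ` of `η 0`, the whole family being independent. -/
structure ShiftData (Ω : Type*) [MeasureSpace Ω] (S : Type*) [MeasurableSpace S] where
  η : ℤ → Ω → S
  ηc : ℤ → ℤ → ℕ → Ω → S
  meas_η : ∀ t, Measurable (η t)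
  meas_ηc : ∀ s t ℓ, Measurable (ηc s t ℓ)
  ident : ∀ t, Measure.map (η t) ℙ = Measure.map (η 0) ℙ
  ident_c : ∀ s t ℓ, Measure.map (ηc s t ℓ) ℙ = Measure.map (η 0) ℙ
  indep : iIndepFun
      (Sum.elim η fun p : ℤ × ℤ × ℕ => ηc p.1 p.2.1 p.2.2) ℙ

/-- The Bernoulli shift process `m_t = h(η_t, η_{t-1}, …)`. -/
def ShiftData.proc {S : Type*} [MeasurableSpace S] (D : ShiftData Ω S)
    (h : (ℕ → S) → ℝ) (t : ℤ) (ω : Ω) : ℝ :=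
  h fun n => D.η (t - n) ω

/-- The coupled version `m̃_{t,ℓ} = h(η_t, …, η_{t-ℓ+1}, η̃_{t-ℓ,t,ℓ}, …)`, replacing the
innovations at lags `≥ ℓ` with independent copies. -/
def ShiftData.coup {S : Type*} [MeasurableSpace S] (D : ShiftData Ω S)
    (h : (ℕ → S) → ℝ) (t : ℤ) (ℓ : ℕ) (ω : Ω) : ℝ :=
  h fun n => if n < ℓ then D.η (t - n) ω else D.ηc (t - n) t ℓ ω

/-- `X` is an `L_ν`-decomposable Bernoulli shift with rate `a`. -/
def IsBernoulliShift (X : ℤ → Ω → ℝ) (ν a : ℝ) : Prop :=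
  ∃ (S : Type) (_ : MeasurableSpace S) (D : ShiftData Ω S) (h : (ℕ → S) → ℝ) (c₀ : ℝ),
    Measurable h ∧ 0 < c₀ ∧
    (∀ t ω, X t ω = D.proc h t ω) ∧
    (∀ t, Integrable fun ω => |X t ω| ^ ν) ∧
    ∀ (t : ℤ) (ℓ : ℕ), 1 ≤ ℓ →
      (Integrable fun ω => |X t ω - D.coup h t ℓ ω| ^ ν) ∧
      lnorm (fun ω => X t ω - D.coup h t ℓ ω) ν ≤ c₀ * (ℓ : ℝ) ^ (-a)

/-- `X_m = O_P(b_m)`: for every `ε > 0` there is `M` with `sup_m P(|X_m| > M b_m) ≤ ε`. -/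
def IsBigOP (X : ℕ → Ω → ℝ) (b : ℕ → ℝ) : Prop :=
  ∀ ε : ℝ, 0 < ε → ∃ M : ℝ, ∀ m, (ℙ {ω | M * b m < |X m ω|}).toReal ≤ ε

/-- `X_m = o_P(1)`: convergence to zero in probability. -/
def IsoP (X : ℕ → Ω → ℝ) : Prop :=
  ∀ ε : ℝ, 0 < ε → Tendsto (fun m => (ℙ {ω | ε ≤ |X m ω|}).toReal) atTop (𝓝 0)

/-- A standard Wiener process: `W 0 = 0` a.s., independent Gaussian increments with the right
variances, and continuous paths. -/
structure IsStdWiener (W : ℝ → Ω → ℝ) : Prop where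
  meas : ∀ t, Measurable (W t)
  zero : ∀ᵐ ω ∂(ℙ : Measure Ω), W 0 ω = 0
  indep_incr : ∀ (n : ℕ) (t : Fin (n + 1) → ℝ), (∀ i, 0 ≤ t i) → Monotone t →
    iIndepFun
      (fun i : Fin n => fun ω => W (t i.succ) ω - W (t i.castSucc) ω) ℙ
  gauss_incr : ∀ s t : ℝ, 0 ≤ s → s ≤ t →
    Measure.map (fun ω => W t ω - W s ω) ℙ = gaussianReal 0 ((t - s).toNNReal)
  cont : ∀ᵐ ω ∂(ℙ : Measure Ω), Continuous fun t : ℝ => W t ω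

/-- Convergence in distribution of real random variables (possibly defined on another
probability space), tested against bounded continuous functions. -/
def TendstoInDistrib {Ω' : Type*} [MeasureSpace Ω'] (X : ℕ → Ω → ℝ) (L : Ω' → ℝ) : Prop :=
  ∀ f : ℝ → ℝ, Continuous f → (∃ M, ∀ x, |f x| ≤ M) →
    Tendsto (fun m => ∫ ω, f (X m ω)) atTop (𝓝 (∫ ω', f (L ω')))

/-- The training-sample least squares estimator. -/
def betaHat {d : ℕ} (x : ℤ → Ω → Fin d → ℝ) (y : ℤ → Ω → ℝ) (m : ℕ) (ω : Ω) :
    Fin d → ℝ :=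
  (∑ t ∈ Finset.Icc (1 : ℤ) (m : ℤ), Matrix.vecMulVec (x t ω) (x t ω))⁻¹ *ᵥ
    ∑ t ∈ Finset.Icc (1 : ℤ) (m : ℤ), y t ω • x t ω

/-- Monitoring residual at time `t`. -/
def resid {d : ℕ} (x : ℤ → Ω → Fin d → ℝ) (y : ℤ → Ω → ℝ) (m : ℕ) (t : ℤ) (ω : Ω) : ℝ :=
  y t ω - x t ω ⬝ᵥ betaHat x y m ω

/-- The CUSUM detector `Q(m;k) = Σ_{t=m+1}^{m+k} ε̂_t`. -/
def Qstat {d : ℕ} (x : ℤ → Ω → Fin d → ℝ) (y : ℤ → Ω → ℝ) (m k : ℕ) (ω : Ω) : ℝ :=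
  ∑ t ∈ Finset.Icc ((m : ℤ) + 1) ((m : ℤ) + k), resid x y m t ω

/-- The boundary function `g_η(m;k) = σ m^{1/2} (1 + k/m) (k/(m+k))^η`. -/
def gBound (σ η : ℝ) (m k : ℕ) : ℝ :=
  σ * (m : ℝ) ^ ((1 : ℝ) / 2) * (1 + (k : ℝ) / m) * ((k : ℝ) / (m + k)) ^ η

/-- The norming sequence `r_m = a_m / (a_m + m)`. -/
def rSeq (a : ℕ → ℕ) (m : ℕ) : ℝ := (a m : ℝ) / (a m + m)

/-- Assumption A1 (weak dependence of errors and regressors). -/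
def AssumpA1 {d : ℕ} (x : ℤ → Ω → Fin d → ℝ) (ε : ℤ → Ω → ℝ) (aexp : ℝ) : Prop :=
  2 < aexp ∧ IsBernoulliShift ε 4 aexp ∧ (∀ t, ∫ ω, ε t ω = 0) ∧
    (0 < ∫ ω, ε 0 ω ^ 2) ∧
    ∀ j : Fin d, (j : ℕ) ≠ 0 → IsBernoulliShift (fun t ω => x t ω j) 4 aexp

/-- Assumption A2 (exogeneity and non-degenerate second moments). -/
def AssumpA2 {d : ℕ} (x : ℤ → Ω → Fin d → ℝ) (ε : ℤ → Ω → ℝ)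
    (C : Matrix (Fin d) (Fin d) ℝ) : Prop :=
  (∀ t, ∫ ω, ε t ω = 0) ∧
  (∀ (t : ℤ) (j : Fin d), (j : ℕ) ≠ 0 → ∫ ω, x t ω j * ε t ω = 0) ∧
  (∀ (t : ℤ) (i j : Fin d), ∫ ω, x t ω i * x t ω j = C i j) ∧ C.PosDef

/-- The long-run variance `σ² = lim_m E (m^{-1/2} Σ_{t=1}^m ε_t)²`. -/
def IsLongRunVar (ε : ℤ → Ω → ℝ) (σ2 : ℝ) : Prop :=
  Tendsto (fun m : ℕ => ∫ ω, ((m : ℝ) ^ (-(1 : ℝ) / 2) * ∑ t ∈ Finset.Icc (1 : ℤ) (m : ℤ), ε t ω) ^ 2)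
    atTop (𝓝 σ2)

/-- The trimming conditions: `a_m → ∞`, `a_m / min{m, T_m} → 0`, and `a_m ≤ T_m`. -/
def Trimming (a T : ℕ → ℕ) : Prop :=
  Tendsto a atTop atTop ∧
  Tendsto (fun m => (a m : ℝ) / min (m : ℝ) (T m : ℝ)) atTop (𝓝 0) ∧
  ∀ m, a m ≤ T m

open Classical in
/-- First crossing time in `[lo, T]`, equal to `T` if no crossing occurs. -/
def stopTime (T : ℕ) (lo : ℕ) (cross : ℕ → Prop) : ℕ :=
  if (∃ k, lo ≤ k ∧ k ≤ T ∧ cross k) then sInf {k | lo ≤ k ∧ k ≤ T ∧ cross k} else T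

/-- `sup_{1 ≤ u < ∞} |W(u)|/u^η`. -/
def wienerSupTail {Ω' : Type*} [MeasureSpace Ω'] (W : ℝ → Ω' → ℝ) (η : ℝ) (ω : Ω') : ℝ :=
  ⨆ u : {u : ℝ // 1 ≤ u}, |W u ω| / (u : ℝ) ^ η


/-- Sample autocovariance of the residuals, `γ̂_j = m⁻¹ Σ_{t=j+1}^m ε̂_t ε̂_{t-j}`. -/
def gammaHat {d : ℕ} (x : ℤ → Ω → Fin d → ℝ) (y : ℤ → Ω → ℝ) (m j : ℕ) (ω : Ω) : ℝ :=
  (m : ℝ)⁻¹ * ∑ t ∈ Finset.Icc ((j : ℤ) + 1) (m : ℤ), resid x y m t ω * resid x y m (t - j) ω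

/-- The Bartlett long-run variance estimator with bandwidth `H`. -/
def sigmaHatSq {d : ℕ} (x : ℤ → Ω → Fin d → ℝ) (y : ℤ → Ω → ℝ) (H m : ℕ) (ω : Ω) : ℝ :=
  gammaHat x y m 0 ω + 2 * ∑ j ∈ Finset.Icc 1 H, (1 - (j : ℝ) / (H + 1)) * gammaHat x y m j ω

/-- Regressor vector of the dynamic model: exogenous regressors followed by `p` lags of `y`. -/
def xdyn {dz p : ℕ} (z : ℤ → Ω → Fin dz → ℝ) (y : ℤ → Ω → ℝ) (t : ℤ) (ω : Ω) :
    Fin (dz + p) → ℝ :=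
  Fin.append (z t ω) fun i : Fin p => y (t - 1 - (i : ℕ)) ω

end OnlineCPD

namespace OnlineCPD

/-!
Since `m̃_{j,j}` only involves `η_j, …, η_1` and fresh copies, it is independent of `ε₀`, which
is a function of `η_0, η_{-1}, …`. As `E ε₀ = 0`, this gives `γ_j = E(ε₀ (ε_j − m̃_{j,j}))`, and
Hölder's inequality with exponents `4/3` and `4` bounds it by `|ε₀|_{4/3} c₀ j^{-a}`. Hence
`j |γ_j| = O(j^{1-a})`, which is summable for `a > 2`.
-/

section Independence

variable {Ω ι κ κ' β : Type*} [mβ : MeasurableSpace β]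

theorem measurable_pi_iSup_comap (F : ι → Ω → β) (χ : κ → ι) :
    Measurable[⨆ i ∈ Set.range χ, mβ.comap (F i)] fun ω k => F (χ k) ω :=
  @measurable_pi_lambda _ _ _ (⨆ i ∈ Set.range χ, mβ.comap (F i)) _ _ fun k =>
    Measurable.of_comap_le (le_biSup (fun i => mβ.comap (F i)) (Set.mem_range_self k))

variable [MeasurableSpace Ω] {μ : Measure Ω}

theorem _root_.ProbabilityTheory.iIndepFun.indepFun_comp_of_disjoint_range {F : ι → Ω → β}
    (hF : iIndepFun F μ) (hFm : ∀ i, Measurable (F i)) {φ : κ → ι} {ψ : κ' → ι}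
    (hφψ : Disjoint (Set.range φ) (Set.range ψ)) :
    IndepFun (fun ω k => F (φ k) ω) (fun ω k => F (ψ k) ω) μ :=
  indep_of_indep_of_le_left
    (indep_of_indep_of_le_right
      (indep_iSup_of_disjoint (fun i => (hFm i).comap_le) hF.iIndep hφψ)
      (measurable_pi_iSup_comap F ψ).comap_le)
    (measurable_pi_iSup_comap F φ).comap_le

end Independence

section Holder

variable {Ω : Type*} [MeasureSpace Ω]

theorem lnorm_nonneg (X : Ω → ℝ) (ν : ℝ) : 0 ≤ lnorm X ν :=
  Real.rpow_nonneg (integral_nonneg fun _ => Real.rpow_nonneg (abs_nonneg _) _) _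

theorem memLp_ofReal_of_integrable_abs_rpow {f : Ω → ℝ} {p : ℝ} (hp : 0 < p)
    (hf : AEStronglyMeasurable f ℙ) (hint : Integrable (fun ω => |f ω| ^ p) ℙ) :
    MemLp f (ENNReal.ofReal p) ℙ := by
  rw [← integrable_norm_rpow_iff hf (by simpa using hp) ENNReal.ofReal_ne_top,
    ENNReal.toReal_ofReal hp.le]
  simpa only [Real.norm_eq_abs] using hint

theorem abs_integral_mul_le_lnorm_mul_lnorm_sub_of_indepFun {X Y Y' : Ω → ℝ} {p q : ℝ}
    (hpq : p.HolderConjugate q) (hind : IndepFun X Y') (hX0 : ∫ ω, X ω = 0)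
    (hX : MemLp X (ENNReal.ofReal p)) (hY : MemLp Y (ENNReal.ofReal q))
    (hYY' : MemLp (fun ω => Y ω - Y' ω) (ENNReal.ofReal q)) :
    |∫ ω, X ω * Y ω| ≤ lnorm X p * lnorm (fun ω => Y ω - Y' ω) q := by
  have := hpq.ennrealOfReal
  have hY' : MemLp Y' (ENNReal.ofReal q) := by
    convert hY.sub hYY' using 1
    ext ω
    simp
  have hcoupled : ∫ ω, X ω * Y' ω = 0 := by
    rw [hind.integral_fun_mul_eq_mul_integral hX.1 hY'.1, hX0, zero_mul]
  have hXY : Integrable (fun ω => X ω * Y ω) ℙ := hX.integrable_mul hY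
  have hXY' : Integrable (fun ω => X ω * Y' ω) ℙ := hX.integrable_mul hY'
  have hsplit : ∫ ω, X ω * Y ω = ∫ ω, X ω * (Y ω - Y' ω) := by
    simp_rw [mul_sub]
    rw [integral_sub hXY hXY', hcoupled, sub_zero]
  calc |∫ ω, X ω * Y ω| ≤ ∫ ω, ‖X ω‖ * ‖Y ω - Y' ω‖ := by
        rw [hsplit]
        simpa only [Real.norm_eq_abs, abs_mul] using
          norm_integral_le_integral_norm fun ω => X ω * (Y ω - Y' ω)
    _ ≤ lnorm X p * lnorm (fun ω => Y ω - Y' ω) q := by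
        simpa only [lnorm, Real.norm_eq_abs] using integral_mul_norm_le_Lp_mul_Lq hpq hX hYY'

end Holder

section BernoulliShift

variable {Ω S : Type*} [MeasureSpace Ω] [MeasurableSpace S] (D : ShiftData Ω S)
  {h : (ℕ → S) → ℝ}

theorem ShiftData.measurable_proc (hh : Measurable h) (t : ℤ) : Measurable (D.proc h t) :=
  hh.comp (measurable_pi_lambda _ fun n => D.meas_η (t - n))

theorem ShiftData.measurable_coup (hh : Measurable h) (t : ℤ) (ℓ : ℕ) :
    Measurable (D.coup h t ℓ) := by
  refine hh.comp (measurable_pi_lambda _ fun n => ?_)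
  split_ifs
  exacts [D.meas_η _, D.meas_ηc _ _ _]

/-- `m_s` uses the innovations `η_u` with `u ≤ s`, while `m̃_{t,ℓ}` uses `η_u` with `u > t - ℓ`
and the copies `η̃`. -/
theorem ShiftData.indepFun_proc_coup (hh : Measurable h) {s t : ℤ} {ℓ : ℕ} (hst : s + ℓ ≤ t) :
    IndepFun (D.proc h s) (D.coup h t ℓ) := by
  set F := Sum.elim D.η fun p : ℤ × ℤ × ℕ => D.ηc p.1 p.2.1 p.2.2
  let ψ : ℕ → ℤ ⊕ ℤ × ℤ × ℕ := fun n =>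
    if n < ℓ then Sum.inl (t - n) else Sum.inr (t - n, t, ℓ)
  have hFm : ∀ i, Measurable (F i) := by
    rintro (u | p)
    exacts [D.meas_η u, D.meas_ηc _ _ _]
  have hdisj : Disjoint (Set.range fun n : ℕ => (Sum.inl (s - n) : ℤ ⊕ ℤ × ℤ × ℕ))
      (Set.range ψ) := by
    refine Set.disjoint_range_iff.mpr fun m n hmn => ?_
    simp only [ψ] at hmn
    split_ifs at hmn
    have := Sum.inl_injective hmn
    omega
  have hcoup : D.coup h t ℓ = h ∘ fun ω n => F (ψ n) ω := by
    ext ω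
    simp only [ShiftData.coup, Function.comp_apply, ψ]
    congr 1
    ext n
    split_ifs <;> rfl
  rw [hcoup]
  exact (D.indep.indepFun_comp_of_disjoint_range hFm hdisj).comp hh hh

end BernoulliShift

theorem summable_nat_mul_abs_of_abs_le_rpow {f : ℕ → ℝ} {C a : ℝ} (ha : 2 < a)
    (hf : ∀ j : ℕ, 1 ≤ j → |f j| ≤ C * (j : ℝ) ^ (-a)) :
    Summable fun j : ℕ => (j : ℝ) * |f j| := by
  refine Summable.of_nonneg_of_le (fun j => by positivity) (fun j => ?_)
    ((Real.summable_nat_rpow.mpr (by linarith : 1 - a < -1)).mul_left C)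
  rcases Nat.eq_zero_or_pos j with rfl | hj
  · simp [Real.zero_rpow (by linarith : 1 - a ≠ 0)]
  · have hjpos : (0 : ℝ) < j := Nat.cast_pos.mpr hj
    calc (j : ℝ) * |f j| ≤ j * (C * (j : ℝ) ^ (-a)) :=
          mul_le_mul_of_nonneg_left (hf j hj) hjpos.le
      _ = C * (j : ℝ) ^ (1 - a) := by
          rw [sub_eq_add_neg, Real.rpow_add hjpos, Real.rpow_one]
          ring

theorem autocovariance_summable_general
    {Ω : Type} [MeasureSpace Ω] [IsProbabilityMeasure (ℙ : Measure Ω)]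
    (ε : ℤ → Ω → ℝ) (aexp : ℝ) (ha : 2 < aexp)
    (hshift : IsBernoulliShift ε 4 aexp)
    (hmean : ∀ t, ∫ ω, ε t ω = 0) :
    Summable fun j : ℕ => (j : ℝ) * |∫ ω, ε 0 ω * ε (j : ℤ) ω| := by
  obtain ⟨S, _, D, h, c₀, hh, -, hrep, hint, hcoup⟩ := hshift
  obtain rfl : ε = D.proc h := funext fun t => funext (hrep t)
  have hL4 : ∀ t, MemLp (D.proc h t) (ENNReal.ofReal 4) := fun t =>
    memLp_ofReal_of_integrable_abs_rpow (by norm_num)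
      (D.measurable_proc hh t).aestronglyMeasurable (hint t)
  refine summable_nat_mul_abs_of_abs_le_rpow (C := lnorm (D.proc h 0) (4 / 3) * c₀) ha
    fun j hj => ?_
  obtain ⟨hintj, hratej⟩ := hcoup j j hj
  calc |∫ ω, D.proc h 0 ω * D.proc h j ω|
      ≤ lnorm (D.proc h 0) (4 / 3) * lnorm (fun ω => D.proc h j ω - D.coup h j j ω) 4 :=
        abs_integral_mul_le_lnorm_mul_lnorm_sub_of_indepFun
          (by rw [Real.holderConjugate_iff]; norm_num)
          (D.indepFun_proc_coup hh (by simp)) (hmean 0)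
          ((hL4 0).mono_exponent (ENNReal.ofReal_le_ofReal (by norm_num))) (hL4 j)
          (memLp_ofReal_of_integrable_abs_rpow (by norm_num)
            ((D.measurable_proc hh j).sub (D.measurable_coup hh j j)).aestronglyMeasurable
            hintj)
    _ ≤ lnorm (D.proc h 0) (4 / 3) * c₀ * (j : ℝ) ^ (-aexp) := by
        rw [mul_assoc]
        exact mul_le_mul_of_nonneg_left hratej (lnorm_nonneg _ _)

/-- **Lemma (summability of weighted autocovariances).**
If `{ε_t}` is a stationary `L₄`-decomposable Bernoulli shift with mean zero and rate `a > 2`,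
then `Σ_{j=1}^∞ j |γ_j| < ∞`, where `γ_j = E(ε₀ ε_j)`. -/
theorem autocovariance_summable
    {Ω : Type} [MeasureSpace Ω] [IsProbabilityMeasure (ℙ : Measure Ω)]
    (ε : ℤ → Ω → ℝ) (aexp : ℝ) (ha : 2 < aexp)
    (hmeas : ∀ t, Measurable (ε t))
    (hshift : IsBernoulliShift ε 4 aexp)
    (hmean : ∀ t, ∫ ω, ε t ω = 0)
    (hstat : ∀ (n : ℕ) (t : Fin n → ℤ) (s : ℤ),
      Measure.map (fun ω i => ε (t i) ω) ℙ = Measure.map (fun ω i => ε (t i + s) ω) ℙ) :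
    Summable fun j : ℕ => (j : ℝ) * |∫ ω, ε 0 ω * ε (j : ℤ) ω| :=
  autocovariance_summable_general ε aexp ha hshift hmean

end OnlineCPD
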